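/- Suppose p is NOT a product of its marginals, all p_{i·} > 0 and p_{·j} > 0, and λ > 0. Then T̂_A + T̂_B converges in probability, as n → ∞, to the constant μ_p = T_A + T_B, and μ_p > 0. -/

import Mathlib

open MeasureTheory ProbabilityTheory Real Finset Filter Topology

noncomputable section

/-- Row marginal. -/
def rowM {I J : ℕ} (p : Fin I → Fin J → ℝ) (i : Fin I) : ℝ := ∑ j, p i j

/-- Column marginal. -/
def colM {I J : ℕ} (p : Fin I → Fin J → ℝ) (j : Fin J) : ℝ := ∑ i, p i j

/-- Joint probability distribution. -/
def IsJointDist {I J : ℕ} (p : Fin I → Fin J → ℝ) : Prop :=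
  (∀ i j, 0 ≤ p i j) ∧ ∑ i, ∑ j, p i j = 1

/-- Independence of the two coordinates. -/
def IndepDist {I J : ℕ} (p : Fin I → Fin J → ℝ) : Prop :=
  ∀ i j, p i j = rowM p i * colM p j

def cLam {I J : ℕ} (l : ℝ) (p : Fin I → Fin J → ℝ) : ℝ := ∑ i, ∑ j, p i j ^ l

/-- Joint power escort distribution. -/
def pStar {I J : ℕ} (l : ℝ) (p : Fin I → Fin J → ℝ) (i : Fin I) (j : Fin J) : ℝ :=
  p i j ^ l / cLam l p

def rowStar {I J : ℕ} (l : ℝ) (p : Fin I → Fin J → ℝ) (i : Fin I) : ℝ := ∑ j, pStar l p i j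
def colStar {I J : ℕ} (l : ℝ) (p : Fin I → Fin J → ℝ) (j : Fin J) : ℝ := ∑ i, pStar l p i j

/-- Row-marginal power escort. -/
def qEsc {I J : ℕ} (l : ℝ) (p : Fin I → Fin J → ℝ) (i : Fin I) : ℝ :=
  rowM p i ^ l / ∑ s, rowM p s ^ l

/-- Column-marginal power escort. -/
def rEsc {I J : ℕ} (l : ℝ) (p : Fin I → Fin J → ℝ) (j : Fin J) : ℝ :=
  colM p j ^ l / ∑ t, colM p t ^ l

/-- `x ln x` with the convention `0 ln 0 = 0` (automatic since `Real.log 0 = 0`). -/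
def mlog (x : ℝ) : ℝ := x * Real.log x

def TA {I J : ℕ} (l : ℝ) (p : Fin I → Fin J → ℝ) : ℝ :=
  (∑ i, ∑ j, mlog (pStar l p i j)) - (∑ i, mlog (qEsc l p i)) - (∑ j, mlog (rEsc l p j))

def TB {I J : ℕ} (l : ℝ) (p : Fin I → Fin J → ℝ) : ℝ :=
  (∑ i, mlog (qEsc l p i)) + (∑ j, mlog (rEsc l p j))
    - (∑ i, mlog (rowStar l p i)) - (∑ j, mlog (colStar l p j))

/-- Empirical joint distribution from a sample of size `n`. -/
def emp {I J : ℕ} {Ω : Type*} (W : ℕ → Ω → Fin I × Fin J) (n : ℕ) (ω : Ω)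
    (i : Fin I) (j : Fin J) : ℝ :=
  (((Finset.range n).filter (fun k => W k ω = (i, j))).card : ℝ) / n

/-- Index set for the vector `v`: all cells except `(I, J)`. -/
abbrev VIdx (I J : ℕ) := {x : Fin (I + 1) × Fin (J + 1) // x ≠ (Fin.last I, Fin.last J)}

/-- Reconstruct a joint distribution from its `IJ-1` free coordinates. -/
def fill {I J : ℕ} (v : VIdx I J → ℝ) : Fin (I + 1) → Fin (J + 1) → ℝ :=
  fun i j => if h : (i, j) = (Fin.last I, Fin.last J) then 1 - ∑ s, v s else v ⟨(i, j), h⟩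

/-- Gradient of `T_A` (as a function of the free coordinates `v`), coordinate `s`. -/
def gradTA {I J : ℕ} (l : ℝ) (p : Fin (I + 1) → Fin (J + 1) → ℝ) (s : VIdx I J) : ℝ :=
  fderiv ℝ (fun w : VIdx I J → ℝ => TA l (fill w)) (fun t => p t.1.1 t.1.2) (Pi.single s 1)

/-- The delta-method variance `σ² = ∇ᵀ Σ(v) ∇`. -/
def sigma2 {I J : ℕ} (l : ℝ) (p : Fin (I + 1) → Fin (J + 1) → ℝ) : ℝ :=
  ∑ s : VIdx I J, ∑ t : VIdx I J,
    gradTA l p s * ((if s = t then p s.1.1 s.1.2 else 0) - p s.1.1 s.1.2 * p t.1.1 t.1.2)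
      * gradTA l p t

/-- Chi-squared measure with `k` degrees of freedom: `Gamma(k/2, 1/2)`. -/
def chiSquared (k : ℝ) : Measure ℝ := gammaMeasure (k / 2) (1 / 2)


/-!
The escort-marginal terms `q`, `r` cancel in `T_A + T_B`, leaving the mutual information of the
joint escort `p*`, i.e. `∑ p*_{i·} p*_{·j} klFun (p*_{ij} / (p*_{i·} p*_{·j}))`, the
Kullback–Leibler divergence of `p*` from the product of its marginals. It is positive unless `p*`
is a product, and then so is `p = (c_λ p*)^{1/λ}`. For consistency, the strong law of large
numbers makes the empirical distribution converge almost surely to `p`, and `T_A + T_B` is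
continuous at `p` because `c_λ(p) > 0`.
-/

open InformationTheory

section

variable {I J : ℕ}

def mutualInfo (P : Fin I → Fin J → ℝ) : ℝ :=
  ∑ i, ∑ j, mlog (P i j) - ∑ i, mlog (rowM P i) - ∑ j, mlog (colM P j)

theorem TA_add_TB (l : ℝ) (p : Fin I → Fin J → ℝ) :
    TA l p + TB l p = mutualInfo (pStar l p) := by
  unfold TA TB mutualInfo rowStar colStar rowM colM
  ring

section JointDist

variable {p : Fin I → Fin J → ℝ}

lemma IsJointDist.le_rowM (hp : IsJointDist p) (i : Fin I) (j : Fin J) : p i j ≤ rowM p i :=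
  Finset.single_le_sum (fun t _ => hp.1 i t) (Finset.mem_univ j)

lemma IsJointDist.le_colM (hp : IsJointDist p) (i : Fin I) (j : Fin J) : p i j ≤ colM p j :=
  Finset.single_le_sum (fun s _ => hp.1 s j) (Finset.mem_univ i)

lemma IsJointDist.rowM_nonneg (hp : IsJointDist p) (i : Fin I) : 0 ≤ rowM p i :=
  Finset.sum_nonneg fun j _ => hp.1 i j

lemma IsJointDist.colM_nonneg (hp : IsJointDist p) (j : Fin J) : 0 ≤ colM p j :=
  Finset.sum_nonneg fun i _ => hp.1 i j

lemma IsJointDist.sum_rowM (hp : IsJointDist p) : ∑ i, rowM p i = 1 := hp.2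

lemma IsJointDist.sum_colM (hp : IsJointDist p) : ∑ j, colM p j = 1 :=
  Finset.sum_comm.trans hp.2

lemma IsJointDist.exists_pos (hp : IsJointDist p) : ∃ i j, 0 < p i j := by
  by_contra! h
  have : ∑ i, ∑ j, p i j = 0 :=
    Finset.sum_eq_zero fun i _ => Finset.sum_eq_zero fun j _ => le_antisymm (h i j) (hp.1 i j)
  simp [hp.2] at this

lemma indepDist_of_eq_mul (hp : IsJointDist p) {u : Fin I → ℝ} {v : Fin J → ℝ}
    (h : ∀ i j, p i j = u i * v j) : IndepDist p := by
  have hrow : ∀ i, rowM p i = u i * ∑ j, v j := by simp [rowM, h, Finset.mul_sum]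
  have hcol : ∀ j, colM p j = v j * ∑ i, u i := by simp [colM, h, Finset.mul_sum, mul_comm]
  have hone : (∑ i, u i) * ∑ j, v j = 1 := by simp [← hp.2, Finset.sum_mul_sum, h]
  intro i j
  rw [h, hrow, hcol]
  linear_combination (-(u i * v j)) * hone

end JointDist

-- Also valid when `a * b = 0`: then `x = 0`, and `x / 0 = 0`, `klFun 0 = 1`.
lemma mul_mul_klFun_div {x a b : ℝ} (hx : 0 ≤ x) (hxa : x ≤ a) (hxb : x ≤ b) :
    a * b * klFun (x / (a * b)) = mlog x - x * log a - x * log b + (a * b - x) := by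
  rcases hx.eq_or_lt with rfl | hx
  · simp [klFun_zero, mlog]
  · have ha := hx.trans_le hxa
    have hb := hx.trans_le hxb
    rw [klFun_apply, mlog, log_div hx.ne' (by positivity), log_mul ha.ne' hb.ne']
    field_simp
    ring

theorem mutualInfo_eq_sum_mul_klFun {P : Fin I → Fin J → ℝ} (hP : IsJointDist P) :
    mutualInfo P =
      ∑ i, ∑ j, rowM P i * colM P j * klFun (P i j / (rowM P i * colM P j)) := by
  have hcell : ∀ i j, rowM P i * colM P j * klFun (P i j / (rowM P i * colM P j)) =
      mlog (P i j) - P i j * log (rowM P i) - P i j * log (colM P j)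
        + (rowM P i * colM P j - P i j) :=
    fun i j => mul_mul_klFun_div (hP.1 i j) (hP.le_rowM i j) (hP.le_colM i j)
  have hrow : ∑ i, ∑ j, P i j * log (rowM P i) = ∑ i, mlog (rowM P i) := by
    simp [mlog, rowM, Finset.sum_mul]
  have hcol : ∑ i, ∑ j, P i j * log (colM P j) = ∑ j, mlog (colM P j) := by
    rw [Finset.sum_comm]
    simp [mlog, colM, Finset.sum_mul]
  have hprod : ∑ i, ∑ j, rowM P i * colM P j = 1 := by
    rw [← Finset.sum_mul_sum, hP.sum_rowM, hP.sum_colM, one_mul]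
  simp only [hcell, Finset.sum_add_distrib, Finset.sum_sub_distrib, hrow, hcol, hprod, hP.2]
  rw [mutualInfo]
  ring

theorem mutualInfo_pos {P : Fin I → Fin J → ℝ} (hP : IsJointDist P) (hind : ¬ IndepDist P) :
    0 < mutualInfo P := by
  obtain ⟨i, j, hij⟩ : ∃ i j, P i j ≠ rowM P i * colM P j := by simpa [IndepDist] using hind
  have hterm : ∀ i j, 0 ≤ rowM P i * colM P j * klFun (P i j / (rowM P i * colM P j)) :=
    fun i j => have hc := mul_nonneg (hP.rowM_nonneg i) (hP.colM_nonneg j)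
      mul_nonneg hc (klFun_nonneg (div_nonneg (hP.1 i j) hc))
  have hc : 0 < rowM P i * colM P j := by
    refine (mul_nonneg (hP.rowM_nonneg i) (hP.colM_nonneg j)).lt_of_ne' fun h => hij ?_
    rw [h]
    rcases mul_eq_zero.1 h with h | h <;> linarith [hP.le_rowM i j, hP.le_colM i j, hP.1 i j]
  have hkl : 0 < klFun (P i j / (rowM P i * colM P j)) :=
    (klFun_nonneg (div_nonneg (hP.1 i j) hc.le)).lt_of_ne' fun h =>
      hij ((div_eq_one_iff_eq hc.ne').1 ((klFun_eq_zero_iff (div_nonneg (hP.1 i j) hc.le)).1 h))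
  rw [mutualInfo_eq_sum_mul_klFun hP]
  exact Finset.sum_pos' (fun i _ => Finset.sum_nonneg fun j _ => hterm i j)
    ⟨i, Finset.mem_univ _, Finset.sum_pos' (fun j _ => hterm i j)
      ⟨j, Finset.mem_univ _, mul_pos hc hkl⟩⟩

section Escort

variable {l : ℝ} {p : Fin I → Fin J → ℝ}

lemma cLam_pos (hp : IsJointDist p) : 0 < cLam l p := by
  obtain ⟨i, j, hij⟩ := hp.exists_pos
  exact Finset.sum_pos' (fun i _ => Finset.sum_nonneg fun j _ => rpow_nonneg (hp.1 i j) l)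
    ⟨i, Finset.mem_univ _, Finset.sum_pos' (fun j _ => rpow_nonneg (hp.1 i j) l)
      ⟨j, Finset.mem_univ _, rpow_pos_of_pos hij l⟩⟩

lemma isJointDist_pStar (hp : IsJointDist p) : IsJointDist (pStar l p) :=
  ⟨fun i j => div_nonneg (rpow_nonneg (hp.1 i j) l) (cLam_pos hp).le, by
    simp only [pStar, ← Finset.sum_div]
    exact div_self (cLam_pos hp).ne'⟩

/-- Taking `λ`-th roots turns a product form of `p*` into one of `p`. -/
lemma indepDist_of_indepDist_pStar (hl : l ≠ 0) (hp : IsJointDist p)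
    (h : IndepDist (pStar l p)) : IndepDist p := by
  have hp' := isJointDist_pStar (l := l) hp
  refine indepDist_of_eq_mul hp (u := fun i => (cLam l p * rowM (pStar l p) i) ^ l⁻¹)
    (v := fun j => colM (pStar l p) j ^ l⁻¹) fun i j => ?_
  have hpow : p i j ^ l = cLam l p * rowM (pStar l p) i * colM (pStar l p) j := by
    rw [mul_assoc, ← h i j, pStar, mul_div_cancel₀ _ (cLam_pos hp).ne']
  rw [← mul_rpow (mul_nonneg (cLam_pos hp).le (hp'.rowM_nonneg i)) (hp'.colM_nonneg j), ← hpow,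
    rpow_rpow_inv (hp.1 i j) hl]

lemma continuous_cLam (hl : 0 ≤ l) : Continuous (cLam l : (Fin I → Fin J → ℝ) → ℝ) :=
  continuous_finsetSum _ fun i _ => continuous_finsetSum _ fun j _ =>
    (continuous_rpow_const hl).comp (continuous_apply_apply i j)

lemma continuousAt_pStar (hl : 0 ≤ l) (hc : cLam l p ≠ 0) : ContinuousAt (pStar l) p :=
  continuousAt_pi.2 fun i => continuousAt_pi.2 fun j =>
    ((continuous_rpow_const hl).comp (continuous_apply_apply i j)).continuousAt.div
      (continuous_cLam hl).continuousAt hc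

lemma measurable_pStar :
    Measurable (pStar l : (Fin I → Fin J → ℝ) → Fin I → Fin J → ℝ) := by
  unfold pStar cLam
  fun_prop

end Escort

lemma continuous_mutualInfo : Continuous (mutualInfo : (Fin I → Fin J → ℝ) → ℝ) := by
  have := continuous_mul_log
  unfold mutualInfo rowM colM mlog
  fun_prop

section Sampling

variable {Ω : Type*} [MeasurableSpace Ω] {μ : Measure Ω}

lemma identDistrib_of_measure_preimage_singleton {α : Type*} [MeasurableSpace α] [Countable α]
    [MeasurableSingletonClass α] {ν : Measure Ω} {X Y : Ω → α}
    (hX : Measurable X) (hY : Measurable Y)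
    (h : ∀ x, μ (X ⁻¹' {x}) = ν (Y ⁻¹' {x})) : IdentDistrib X Y μ ν :=
  ⟨hX.aemeasurable, hY.aemeasurable, Measure.ext_iff_singleton.2 fun x => by
    rw [Measure.map_apply hX (measurableSet_singleton x),
      Measure.map_apply hY (measurableSet_singleton x), h]⟩

lemma ae_tendsto_frequency {α : Type*} [MeasurableSpace α] [MeasurableSingletonClass α]
    [DecidableEq α] [IsFiniteMeasure μ] {W : ℕ → Ω → α} (hmeas : ∀ k, Measurable (W k))
    (hindep : iIndepFun W μ)
    (hident : ∀ k, IdentDistrib (W k) (W 0) μ μ) (x : α) :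
    ∀ᵐ ω ∂μ, Tendsto (fun n : ℕ => (#{k ∈ range n | W k ω = x} : ℝ) / n) atTop
      (𝓝 (μ.real (W 0 ⁻¹' {x}))) := by
  set f : α → ℝ := Set.indicator {x} 1
  have hf : Measurable f := measurable_one.indicator (measurableSet_singleton x)
  have hlln := strong_law_ae_real (fun k ω => f (W k ω))
    ((integrable_const (1 : ℝ)).indicator (hmeas 0 (measurableSet_singleton x)))
    (fun k k' hkk' => (hindep.comp (fun _ => f) fun _ => hf).indepFun hkk')
    fun k => (hident k).comp hf
  have hmean : μ[fun ω => f (W 0 ω)] = μ.real (W 0 ⁻¹' {x}) :=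
    integral_indicator_one (hmeas 0 (measurableSet_singleton x))
  rw [hmean] at hlln
  filter_upwards [hlln] with ω hω
  convert hω using 3 with n
  simp only [f, Set.indicator_apply, Set.mem_singleton_iff, Pi.one_apply,
    Finset.natCast_card_filter]

lemma measurable_emp {W : ℕ → Ω → Fin I × Fin J} (hmeas : ∀ k, Measurable (W k))
    (n : ℕ) :
    Measurable (emp W n) := by
  refine measurable_pi_lambda _ fun i => measurable_pi_lambda _ fun j => ?_
  simp only [emp, Finset.natCast_card_filter]
  exact (Finset.measurable_sum _ fun k _ => Measurable.ite
    (hmeas k (measurableSet_singleton (i, j))) measurable_const measurable_const).div_const _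

theorem ae_tendsto_emp [IsFiniteMeasure μ] {W : ℕ → Ω → Fin I × Fin J}
    (hmeas : ∀ k, Measurable (W k)) (hindep : iIndepFun W μ) {p : Fin I → Fin J → ℝ}
    (hp : ∀ i j, 0 ≤ p i j)
    (hdist : ∀ k i j, μ {ω | W k ω = (i, j)} = ENNReal.ofReal (p i j)) :
    ∀ᵐ ω ∂μ, Tendsto (fun n => emp W n ω) atTop (𝓝 p) := by
  have hident : ∀ k, IdentDistrib (W k) (W 0) μ μ := fun k =>
    identDistrib_of_measure_preimage_singleton (hmeas k) (hmeas 0) fun x =>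
      (hdist k x.1 x.2).trans (hdist 0 x.1 x.2).symm
  have hcell (i j) : ∀ᵐ ω ∂μ, Tendsto (fun n => emp W n ω i j) atTop (𝓝 (p i j)) := by
    have hfreq : μ.real (W 0 ⁻¹' {(i, j)}) = p i j :=
      (congrArg ENNReal.toReal (hdist 0 i j)).trans (ENNReal.toReal_ofReal (hp i j))
    have := ae_tendsto_frequency hmeas hindep hident (i, j)
    rw [hfreq] at this
    exact this
  filter_upwards [ae_all_iff.2 fun i => ae_all_iff.2 (hcell i)] with ω hω
  exact tendsto_pi_nhds.2 fun i => tendsto_pi_nhds.2 (hω i)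

end Sampling

end

theorem TA_add_TB_consistent_general {I J : ℕ} (l : ℝ) (hl : 0 < l)
    (p : Fin I → Fin J → ℝ) (hp : IsJointDist p) (hnind : ¬ IndepDist p)
    {Ω : Type*} [MeasurableSpace Ω] (μ : MeasureTheory.Measure Ω)
    [MeasureTheory.IsProbabilityMeasure μ]
    (W : ℕ → Ω → Fin I × Fin J) (hmeas : ∀ k, Measurable (W k))
    (hindep : iIndepFun W μ)
    (hdist : ∀ k i j, μ {ω | W k ω = (i, j)} = ENNReal.ofReal (p i j)) :
    MeasureTheory.TendstoInMeasure μ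
      (fun (n : ℕ) ω => TA l (emp W n ω) + TB l (emp W n ω)) atTop
      (fun _ => TA l p + TB l p) ∧
    0 < TA l p + TB l p := by
  simp only [TA_add_TB]
  refine ⟨tendstoInMeasure_of_tendsto_ae (fun n => ?_) ?_, ?_⟩
  · exact (continuous_mutualInfo.measurable.comp
      (measurable_pStar.comp (measurable_emp hmeas n))).aestronglyMeasurable
  · filter_upwards [ae_tendsto_emp hmeas hindep hp.1 hdist] with ω hω
    exact continuous_mutualInfo.continuousAt.tendsto.comp
      ((continuousAt_pStar hl.le (cLam_pos hp).ne').tendsto.comp hω)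
  · exact mutualInfo_pos (isJointDist_pStar hp) fun h =>
      hnind (indepDist_of_indepDist_pStar hl.ne' hp h)

/-- Under the alternative, `T̂_A + T̂_B` converges in probability to the constant
`μ_p = T_A + T_B`, and `μ_p > 0`. -/
theorem TA_add_TB_consistent {I J : ℕ} (l : ℝ) (hl : 0 < l)
    (p : Fin I → Fin J → ℝ) (hp : IsJointDist p) (hnind : ¬ IndepDist p)
    (hrowpos : ∀ i, 0 < rowM p i) (hcolpos : ∀ j, 0 < colM p j)
    {Ω : Type*} [MeasurableSpace Ω] (μ : MeasureTheory.Measure Ω)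
    [MeasureTheory.IsProbabilityMeasure μ]
    (W : ℕ → Ω → Fin I × Fin J) (hmeas : ∀ k, Measurable (W k))
    (hindep : iIndepFun W μ)
    (hdist : ∀ k i j, μ {ω | W k ω = (i, j)} = ENNReal.ofReal (p i j)) :
    MeasureTheory.TendstoInMeasure μ
      (fun (n : ℕ) ω => TA l (emp W n ω) + TB l (emp W n ω)) atTop
      (fun _ => TA l p + TB l p) ∧
    0 < TA l p + TB l p :=
  TA_add_TB_consistent_general l hl p hp hnind μ W hmeas hindep hdist
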